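/- Let T be a finite nonabelian simple group satisfying 3^{1/3}·a(T)·a(Aut(T)) < |T| (equivalently 3·a(T)^3·a(Aut(T))^3 < |T|^3). Then there is no abelian group Γ admitting a regular embedding into Hol(T^m) for any m ≥ 1. -/

import Mathlib

/-- The holomorph `Hol(G) = G ⋊ Aut(G)`. -/
abbrev Hol (G : Type*) [Group G] : Type _ :=
  G ⋊[MonoidHom.id (MulAut G)] MulAut G

/-- The natural action of `Hol(G)` on `G`: `[g, α] · x = g * α x`. -/
def holAct {G : Type*} [Group G] (h : Hol G) (x : G) : G :=
  h.left * h.right x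

/-- `maxAb G` is the maximal order of an abelian subgroup of `G`. -/
noncomputable def maxAb (G : Type*) [Group G] : ℕ :=
  sSup {n | ∃ H : Subgroup G, IsMulCommutative H ∧ Nat.card H = n}

/-!
A regular subgroup of `Hol(T^m)` has order `|T|^m`, while an abelian subgroup of
`Hol(T^m) = T^m ⋊ Aut(T^m)` has order at most `a(T)^m · a(Aut(T^m))`. As `T` is nonabelian simple,
the factors of `T^m` are exactly its minimal normal subgroups, so `Aut(T^m)` permutes them and
the kernel of this permutation action embeds in `Aut(T)^m`; hence
`a(Aut(T^m)) ≤ a(Aut T)^m · a(S_m)`. An abelian permutation group has order at most the product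
of its orbit lengths `k`, and `k^3 ≤ 3^k`, so `a(S_m)^3 ≤ 3^m`. Cubing gives
`|T|^{3m} ≤ (3 · a(T)^3 · a(Aut T)^3)^m`, contradicting the hypothesis.
-/

section MaxAb

variable {G H : Type*} [Group G] [Group H]

theorem maxAb_le_of_forall {b : ℕ}
    (h : ∀ A : Subgroup G, IsMulCommutative A → Nat.card A ≤ b) : maxAb G ≤ b :=
  csSup_le ⟨1, ⊥, inferInstance, Subgroup.card_bot⟩ fun _ ⟨A, hA, hn⟩ => hn ▸ h A hA

theorem bddAbove_maxAb_set [Finite G] :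
    BddAbove {n | ∃ A : Subgroup G, IsMulCommutative A ∧ Nat.card A = n} :=
  ⟨Nat.card G, fun _ ⟨A, _, hn⟩ => hn ▸ A.card_le_card_group⟩

theorem Subgroup.card_le_maxAb [Finite G] (A : Subgroup G) [IsMulCommutative A] :
    Nat.card A ≤ maxAb G :=
  le_csSup bddAbove_maxAb_set ⟨A, inferInstance, rfl⟩

theorem exists_isMulCommutative_card_eq_maxAb [Finite G] :
    ∃ A : Subgroup G, IsMulCommutative A ∧ Nat.card A = maxAb G :=
  Nat.sSup_mem (by exact ⟨1, ⊥, inferInstance, Subgroup.card_bot⟩) bddAbove_maxAb_set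

theorem card_le_maxAb_of_injective [IsMulCommutative G] [Finite H] {f : G →* H}
    (hf : Function.Injective f) : Nat.card G ≤ maxAb H :=
  Nat.card_congr (MonoidHom.ofInjective hf).toEquiv ▸ f.range.card_le_maxAb

theorem maxAb_le_of_injective [Finite H] {f : G →* H} (hf : Function.Injective f) :
    maxAb G ≤ maxAb H :=
  maxAb_le_of_forall fun A _ => card_le_maxAb_of_injective (f := f.comp A.subtype)
    (hf.comp A.subtype_injective)

theorem maxAb_le_maxAb_ker_mul [Finite G] [Finite H] (f : G →* H) :
    maxAb G ≤ maxAb f.ker * maxAb H := by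
  refine maxAb_le_of_forall fun A _ => ?_
  set g := f.comp A.subtype
  have hker : Nat.card g.ker ≤ maxAb f.ker :=
    card_le_maxAb_of_injective (f := (A.subtype.comp g.ker.subtype).codRestrict f.ker
      fun x => x.2) fun x y hxy => Subtype.ext (Subtype.ext congr(($hxy).1))
  calc Nat.card A = Nat.card g.ker * Nat.card g.range := by
        rw [← Subgroup.index_ker, Subgroup.card_mul_index]
    _ ≤ maxAb f.ker * maxAb H := Nat.mul_le_mul hker g.range.card_le_maxAb

theorem maxAb_pi_le {ι : Type*} [Fintype ι] {M : ι → Type*} [∀ i, Group (M i)]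
    [∀ i, Finite (M i)] : maxAb (∀ i, M i) ≤ ∏ i, maxAb (M i) := by
  refine maxAb_le_of_forall fun A _ => ?_
  let B i := A.map (Pi.evalMonoidHom M i)
  have hinj : Function.Injective fun (x : A) i => (⟨x.1 i, x.1, x.2, rfl⟩ : B i) :=
    fun x y hxy => Subtype.ext (funext fun i => congr(($(congrFun hxy i)).1))
  calc Nat.card A ≤ Nat.card (∀ i, B i) := Nat.card_le_card_of_injective _ hinj
    _ = ∏ i, Nat.card (B i) := Nat.card_pi
    _ ≤ ∏ i, maxAb (M i) := Finset.prod_le_prod' fun i _ => (B i).card_le_maxAb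

end MaxAb

instance Hol.finite (G : Type*) [Group G] [Finite G] : Finite (Hol G) :=
  Finite.of_equiv _ SemidirectProduct.equivProd.symm

theorem maxAb_hol_le (G : Type*) [Group G] [Finite G] :
    maxAb (Hol G) ≤ maxAb G * maxAb (MulAut G) := by
  let e : (SemidirectProduct.rightHom : Hol G →* MulAut G).ker ≃* G :=
    (MulEquiv.subgroupCongr SemidirectProduct.range_inl_eq_ker_rightHom).symm.trans
      (MonoidHom.ofInjective SemidirectProduct.inl_injective).symm
  calc maxAb (Hol G) ≤ maxAb (SemidirectProduct.rightHom : Hol G →* MulAut G).ker *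
        maxAb (MulAut G) := maxAb_le_maxAb_ker_mul _
    _ ≤ maxAb G * maxAb (MulAut G) :=
        Nat.mul_le_mul_right _ (maxAb_le_of_injective (f := e.toMonoidHom) e.injective)

theorem Nat.pow_three_le_three_pow (k : ℕ) : k ^ 3 ≤ 3 ^ k := by
  induction k with
  | zero => norm_num
  | succ k ih =>
    rcases Nat.lt_or_ge k 3 with hk | hk
    · interval_cases k <;> norm_num
    · calc (k + 1) ^ 3 ≤ 3 * k ^ 3 := by nlinarith [sq_nonneg k]
        _ ≤ 3 * 3 ^ k := Nat.mul_le_mul_left 3 ih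
        _ = 3 ^ (k + 1) := by ring

theorem card_pow_three_le_three_pow_card (A X : Type*) [Group A] [IsMulCommutative A]
    [MulAction A X] [FaithfulSMul A X] [Finite X] :
    Nat.card A ^ 3 ≤ 3 ^ Nat.card X := by
  classical
  let Ω := MulAction.orbitRel.Quotient A X
  have := Fintype.ofFinite Ω
  -- in an abelian group, an element is determined by where it sends one point of each orbit
  have hinj : Function.Injective
      fun (a : A) (ω : Ω) => (⟨a • ω.out, MulAction.mem_orbit _ a⟩ : MulAction.orbit A ω.out) := by
    intro a b hab
    refine eq_of_smul_eq_smul (α := X) fun x => ?_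
    let ω : Ω := Quotient.mk'' x
    obtain ⟨c, hc⟩ : x ∈ MulAction.orbit A ω.out := by
      rw [← MulAction.orbitRel.Quotient.orbit_eq_orbit_out _ Quotient.out_eq']
      exact MulAction.orbitRel.Quotient.mem_orbit.mpr rfl
    have hω : a • ω.out = b • ω.out := congr(($(congrFun hab ω)).1)
    rw [← hc, smul_smul, smul_smul, mul_comm' a, mul_comm' b, mul_smul, mul_smul, hω]
  have hX : Nat.card X = ∑ ω : Ω, Nat.card (MulAction.orbit A ω.out) := by
    rw [Nat.card_congr (MulAction.selfEquivSigmaOrbits A X), Nat.card_sigma]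
  calc Nat.card A ^ 3 ≤ (∏ ω : Ω, Nat.card (MulAction.orbit A ω.out)) ^ 3 := by
        gcongr
        rw [← Nat.card_pi]
        exact Nat.card_le_card_of_injective _ hinj
    _ = ∏ ω : Ω, Nat.card (MulAction.orbit A ω.out) ^ 3 := (Finset.prod_pow _ _ _).symm
    _ ≤ ∏ ω : Ω, 3 ^ Nat.card (MulAction.orbit A ω.out) :=
        Finset.prod_le_prod' fun ω _ => Nat.pow_three_le_three_pow _
    _ = 3 ^ Nat.card X := by rw [hX, Finset.prod_pow_eq_pow_sum]

theorem maxAb_perm_pow_three_le (α : Type*) [Finite α] :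
    maxAb (Equiv.Perm α) ^ 3 ≤ 3 ^ Nat.card α := by
  obtain ⟨A, hA, hcard⟩ := exists_isMulCommutative_card_eq_maxAb (G := Equiv.Perm α)
  exact hcard ▸ card_pow_three_le_three_pow_card A α

theorem IsSimpleGroup.center_eq_bot_of_exists_mul_ne {T : Type*} [Group T] [IsSimpleGroup T]
    (h : ∃ a b : T, a * b ≠ b * a) : Subgroup.center T = ⊥ :=
  (IsSimpleGroup.eq_bot_or_eq_top_of_normal _ inferInstance).resolve_right fun htop =>
    let ⟨a, b, hab⟩ := h
    hab (Subgroup.mem_center_iff.mp (htop ▸ Subgroup.mem_top b) a)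

section Factors

open Pointwise

variable {ι T : Type*} [Group T] [DecidableEq ι]

variable (T) in
def factorSubgroup (i : ι) : Subgroup (ι → T) :=
  (MonoidHom.mulSingle (fun _ => T) i).range

theorem mulSingle_apply_self_of_mem_factorSubgroup {i : ι} {g : ι → T}
    (hg : g ∈ factorSubgroup T i) : Pi.mulSingle i (g i) = g := by
  obtain ⟨t, rfl⟩ := hg
  simp

instance factorSubgroup_normal (i : ι) : (factorSubgroup T i).Normal :=
  ⟨by
    rintro _ ⟨t, rfl⟩ g
    exact ⟨g i * t * (g i)⁻¹, by ext j; rcases eq_or_ne j i with rfl | hj <;> simp [*]⟩⟩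

theorem factorSubgroup_ne_bot [Nontrivial T] (i : ι) : factorSubgroup T i ≠ ⊥ := by
  obtain ⟨t, ht⟩ := exists_ne (1 : T)
  exact Subgroup.ne_bot_iff_exists_ne_one.mpr ⟨⟨_, t, rfl⟩, by simpa using ht⟩

theorem factorSubgroup_injective [Nontrivial T] :
    Function.Injective (factorSubgroup T : ι → Subgroup (ι → T)) := by
  intro i j hij
  by_contra hne
  obtain ⟨t, ht⟩ := exists_ne (1 : T)
  have hmem : Pi.mulSingle i t ∈ factorSubgroup T j := hij ▸ ⟨t, rfl⟩
  have := congrFun (mulSingle_apply_self_of_mem_factorSubgroup hmem) i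
  simp [Pi.mulSingle_eq_of_ne hne, ht.symm] at this

variable (ι T) in
def factorStabilizer : Subgroup (MulAut (ι → T)) :=
  ⨅ i : ι, MulAction.stabilizer (MulAut (ι → T)) (factorSubgroup T i : Subgroup (ι → T))

theorem mem_factorStabilizer {φ : MulAut (ι → T)} :
    φ ∈ factorStabilizer ι T ↔ ∀ i : ι, φ • factorSubgroup T i = factorSubgroup T i := by
  simp only [factorStabilizer, Subgroup.mem_iInf, MulAction.mem_stabilizer_iff]

def factorEnd (φ : MulAut (ι → T)) (i : ι) : T →* T :=
  (Pi.evalMonoidHom (fun _ => T) i).comp (φ.toMonoidHom.comp (MonoidHom.mulSingle (fun _ => T) i))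

theorem factorEnd_apply (φ : MulAut (ι → T)) (i : ι) (t : T) :
    factorEnd φ i t = φ (Pi.mulSingle i t) i :=
  rfl

theorem mulSingle_factorEnd {φ : MulAut (ι → T)} {i : ι}
    (hφ : φ • factorSubgroup T i = factorSubgroup T i) (t : T) :
    Pi.mulSingle i (factorEnd φ i t) = φ (Pi.mulSingle i t) :=
  mulSingle_apply_self_of_mem_factorSubgroup
    (hφ ▸ Subgroup.smul_mem_pointwise_smul _ φ _ (⟨t, rfl⟩ : Pi.mulSingle i t ∈ factorSubgroup T i))

theorem factorEnd_one (i : ι) : factorEnd (1 : MulAut (ι → T)) i = MonoidHom.id T := by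
  ext t
  simp [factorEnd]

theorem factorEnd_mul (φ : MulAut (ι → T)) {ψ : MulAut (ι → T)} {i : ι}
    (hψ : ψ • factorSubgroup T i = factorSubgroup T i) :
    factorEnd (φ * ψ) i = (factorEnd φ i).comp (factorEnd ψ i) := by
  ext t
  rw [MonoidHom.comp_apply, factorEnd_apply φ, mulSingle_factorEnd hψ]
  rfl

def factorAutHom : factorStabilizer ι T →* (ι → MulAut T) where
  toFun φ i := (factorEnd φ.1 i).toMulEquiv (factorEnd φ⁻¹.1 i)
    (by rw [← factorEnd_mul _ (mem_factorStabilizer.mp φ.2 i), ← Subgroup.coe_mul,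
      inv_mul_cancel, Subgroup.coe_one, factorEnd_one])
    (by rw [← factorEnd_mul _ (mem_factorStabilizer.mp φ⁻¹.2 i), ← Subgroup.coe_mul,
      mul_inv_cancel, Subgroup.coe_one, factorEnd_one])
  map_one' := by ext; simp [factorEnd]
  map_mul' φ ψ := by
    ext i t
    exact congr($(factorEnd_mul φ.1 (mem_factorStabilizer.mp ψ.2 i)) t)

theorem factorAutHom_injective [Finite ι] :
    Function.Injective (factorAutHom : factorStabilizer ι T →* (ι → MulAut T)) := by
  refine (injective_iff_map_eq_one _).mpr fun φ hφ => Subtype.ext ?_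
  refine MulEquiv.toMonoidHom_injective (MonoidHom.pi_ext fun i t => ?_)
  rw [MulEquiv.coe_toMonoidHom, ← mulSingle_factorEnd (mem_factorStabilizer.mp φ.2 i)]
  exact congrArg (Pi.mulSingle i) congr($hφ i t)

section Simple

open commutatorElement

variable [IsSimpleGroup T]

theorem factorSubgroup_le_of_mem_normal (hT : Subgroup.center T = ⊥) {N : Subgroup (ι → T)}
    [hN : N.Normal] {g : ι → T} (hg : g ∈ N) {i : ι} (hi : g i ≠ 1) : factorSubgroup T i ≤ N := by
  obtain ⟨t, ht⟩ : ∃ t : T, ⁅t, g i⁆ ≠ 1 := by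
    by_contra! h
    refine hi (Subgroup.mem_bot.mp (hT ▸ Subgroup.mem_center_iff.mpr fun t => ?_))
    exact commutatorElement_eq_one_iff_mul_comm.mp (h t)
  -- `⁅single i t, g⁆ = single i ⁅t, g i⁆` is a nontrivial element of `N` in the `i`-th factor
  have hcomm : ⁅t, g i⁆ ∈ N.comap (MonoidHom.mulSingle (fun _ => T) i) := by
    have : Pi.mulSingle i ⁅t, g i⁆ = ⁅(Pi.mulSingle i t : ι → T), g⁆ := by
      ext j; rcases eq_or_ne j i with rfl | hj <;> simp [commutatorElement_def, *]
    rw [Subgroup.mem_comap, MonoidHom.mulSingle_apply, this, commutatorElement_def]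
    exact mul_mem (hN.conj_mem g hg _) (inv_mem hg)
  have htop : N.comap (MonoidHom.mulSingle (fun _ => T) i) = ⊤ :=
    (IsSimpleGroup.eq_bot_or_eq_top_of_normal _ (hN.comap _)).resolve_left fun hbot =>
      ht (Subgroup.mem_bot.mp (hbot ▸ hcomm))
  rintro _ ⟨s, rfl⟩
  exact Subgroup.mem_comap.mp (htop ▸ Subgroup.mem_top s)

theorem exists_factorSubgroup_le (hT : Subgroup.center T = ⊥) {N : Subgroup (ι → T)} [N.Normal]
    (hN : N ≠ ⊥) : ∃ j, factorSubgroup T j ≤ N := by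
  obtain ⟨⟨g, hg⟩, hg1⟩ := Subgroup.ne_bot_iff_exists_ne_one.mp hN
  obtain ⟨j, hj⟩ := Function.ne_iff.mp fun h => hg1 (Subtype.ext h)
  exact ⟨j, factorSubgroup_le_of_mem_normal hT hg hj⟩

theorem eq_factorSubgroup_of_le (hT : Subgroup.center T = ⊥) {N : Subgroup (ι → T)} [N.Normal]
    (hN : N ≠ ⊥) {i : ι} (hle : N ≤ factorSubgroup T i) : N = factorSubgroup T i := by
  obtain ⟨⟨g, hg⟩, hg1⟩ := Subgroup.ne_bot_iff_exists_ne_one.mp hN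
  refine le_antisymm hle (factorSubgroup_le_of_mem_normal hT hg fun hgi => hg1 (Subtype.ext ?_))
  change g = 1
  rw [← mulSingle_apply_self_of_mem_factorSubgroup (hle hg), hgi, Pi.mulSingle_one]

theorem exists_smul_factorSubgroup_eq (hT : Subgroup.center T = ⊥) (φ : MulAut (ι → T)) (i : ι) :
    ∃ j, φ • factorSubgroup T i = factorSubgroup T j := by
  have hnormal (ψ : MulAut (ι → T)) (k : ι) : (ψ • factorSubgroup T k).Normal :=
    (factorSubgroup_normal k).map _ ψ.surjective
  have hne (ψ : MulAut (ι → T)) (k : ι) : ψ • factorSubgroup T k ≠ ⊥ := fun h =>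
    factorSubgroup_ne_bot k (by rw [(smul_eq_iff_eq_inv_smul ψ).mp h, Subgroup.smul_bot])
  -- the factors are exactly the minimal normal subgroups, and `φ` permutes those
  obtain ⟨j, hj⟩ := exists_factorSubgroup_le hT (hne φ i)
  refine ⟨j, le_antisymm ?_ hj⟩
  rw [← eq_factorSubgroup_of_le hT (hne φ⁻¹ j) (Subgroup.subset_pointwise_smul_iff.mp hj),
    smul_inv_smul]

section FactorPerm

variable (hT : Subgroup.center T = ⊥)

noncomputable def factorIndex (φ : MulAut (ι → T)) (i : ι) : ι :=
  (exists_smul_factorSubgroup_eq hT φ i).choose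

theorem smul_factorSubgroup (φ : MulAut (ι → T)) (i : ι) :
    φ • factorSubgroup T i = factorSubgroup T (factorIndex hT φ i) :=
  (exists_smul_factorSubgroup_eq hT φ i).choose_spec

theorem factorIndex_one : factorIndex hT (1 : MulAut (ι → T)) = id :=
  funext fun i => factorSubgroup_injective (by rw [← smul_factorSubgroup, one_smul]; rfl)

theorem factorIndex_mul (φ ψ : MulAut (ι → T)) :
    factorIndex hT (φ * ψ) = factorIndex hT φ ∘ factorIndex hT ψ :=
  funext fun i => factorSubgroup_injective <| by
    rw [← smul_factorSubgroup, mul_smul, smul_factorSubgroup, smul_factorSubgroup]; rfl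

noncomputable def factorPerm : MulAut (ι → T) →* Equiv.Perm ι :=
  Equiv.Perm.equivUnitsEnd.symm.toMonoidHom.comp
    (MonoidHom.toHomUnits ⟨⟨factorIndex hT, factorIndex_one hT⟩, factorIndex_mul hT⟩)

theorem ker_factorPerm_le : (factorPerm hT).ker ≤ factorStabilizer ι T := fun φ hφ =>
  mem_factorStabilizer.mpr fun i => by
    rw [smul_factorSubgroup hT]
    exact congrArg (factorSubgroup T) (congrFun congr(⇑$(MonoidHom.mem_ker.mp hφ)) i)

end FactorPerm

theorem maxAb_mulAut_pi_le [Finite T] [Fintype ι] (hT : Subgroup.center T = ⊥) :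
    maxAb (MulAut (ι → T)) ≤ maxAb (MulAut T) ^ Fintype.card ι * maxAb (Equiv.Perm ι) :=
  calc maxAb (MulAut (ι → T)) ≤ maxAb (factorPerm hT).ker * maxAb (Equiv.Perm ι) :=
        maxAb_le_maxAb_ker_mul _
    _ ≤ maxAb (ι → MulAut T) * maxAb (Equiv.Perm ι) :=
        Nat.mul_le_mul_right _ <| maxAb_le_of_injective
          (f := factorAutHom.comp (Subgroup.inclusion (ker_factorPerm_le hT)))
          (factorAutHom_injective.comp (Subgroup.inclusion_injective _))
    _ ≤ maxAb (MulAut T) ^ Fintype.card ι * maxAb (Equiv.Perm ι) := by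
        gcongr
        simpa using maxAb_pi_le (M := fun _ : ι => MulAut T)

end Simple

end Factors

/-- If `T` is a finite nonabelian simple group with `3·a(T)^3·a(Aut T)^3 < |T|^3`, then no
abelian group `Γ` admits a regular embedding into `Hol(T^m)` for any `m ≥ 1`. -/
theorem no_abelian_regular_embedding {T : Type*} [Group T] [Finite T] [IsSimpleGroup T]
    (hna : ∃ a b : T, a * b ≠ b * a)
    (hineq : 3 * (maxAb T) ^ 3 * (maxAb (MulAut T)) ^ 3 < (Nat.card T) ^ 3)
    (m : ℕ) (hm : 1 ≤ m) (Γ : Type*) [CommGroup Γ] :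
    ¬∃ β : Γ →* Hol (Fin m → T), Function.Injective β ∧
        ∀ x y : Fin m → T, ∃! γ : Γ, holAct (β γ) x = y := by
  rintro ⟨β, hβ, hreg⟩
  have hT := IsSimpleGroup.center_eq_bot_of_exists_mul_ne hna
  have hΓ : Nat.card Γ = Nat.card T ^ m := by
    rw [Nat.card_eq_of_bijective _ (Function.bijective_iff_existsUnique _ |>.mpr (hreg 1)),
      Nat.card_fun, Nat.card_fin]
  have hbound : Nat.card T ^ m ≤
      maxAb T ^ m * (maxAb (MulAut T) ^ m * maxAb (Equiv.Perm (Fin m))) :=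
    calc Nat.card T ^ m = Nat.card Γ := hΓ.symm
      _ ≤ maxAb (Hol (Fin m → T)) := card_le_maxAb_of_injective hβ
      _ ≤ maxAb (Fin m → T) * maxAb (MulAut (Fin m → T)) := maxAb_hol_le _
      _ ≤ _ := by
        gcongr
        · simpa using maxAb_pi_le (M := fun _ : Fin m => T)
        · simpa using maxAb_mulAut_pi_le (ι := Fin m) hT
  have hperm := maxAb_perm_pow_three_le (Fin m)
  rw [Nat.card_fin] at hperm
  refine (Nat.pow_lt_pow_left hineq (by omega : m ≠ 0)).not_ge ?_
  calc (Nat.card T ^ 3) ^ m = (Nat.card T ^ m) ^ 3 := by ring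
    _ ≤ (maxAb T ^ m * (maxAb (MulAut T) ^ m * maxAb (Equiv.Perm (Fin m)))) ^ 3 := by gcongr
    _ = (maxAb T ^ 3 * maxAb (MulAut T) ^ 3) ^ m * maxAb (Equiv.Perm (Fin m)) ^ 3 := by ring
    _ ≤ (maxAb T ^ 3 * maxAb (MulAut T) ^ 3) ^ m * 3 ^ m := by gcongr
    _ = (3 * maxAb T ^ 3 * maxAb (MulAut T) ^ 3) ^ m := by ring
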